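/- Let o₁ and o₂ be two uncertain 2D objects that are closed disks B̄(c₁,r) and B̄(c₂,r) of equal radius r > 0 with distinct centers c₁ ≠ c₂. Then for every point x in the plane with dist(x,c₁) = dist(x,c₂) one has p(x) = 1/2, and for every point x with dist(x,c₁) < dist(x,c₂) one has p(x) > 1/2 (and symmetrically p(x) < 1/2 when dist(x,c₁) > dist(x,c₂)). In other words, the probabilistic bisector of two equi-range circular objects is the perpendicular bisector of their centers. -/

import Mathlib

/-!
Write `p(μ, ν)` for the probability that a `μ`-random point is strictly nearer to `x` than an
independent `ν`-random one, so that `p(μ, ν) = ∫ μ(B(x, |v - x|)) dν(v)`. Spheres are null, so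
ties have probability zero and `p(μ, ν) + p(ν, μ) = 1`; in particular `p(U₂, U₂) = 1/2`.
Everything therefore reduces to comparing `U₁(B(x, t))` with `U₂(B(x, t))`. If `x` is nearer to
`c₁`, the reflection in the perpendicular bisector of `c₁ c₂` maps `B̄(c₂, r) \ B̄(c₁, r)` onto
`B̄(c₁, r) \ B̄(c₂, r)` and brings points from `c₂`'s side no farther from `x`, so
`vol (B(x, t) ∩ B̄(c₂, r)) ≤ vol (B(x, t) ∩ B̄(c₁, r))`. The inequality of integrals is strict
when `x` is strictly nearer to `c₁`: for the nonempty open set of `v ∈ B(c₂, r)` with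
`|v - x| > |x - c₁| + r`, the ball `B(x, |v - x|)` contains `B̄(c₁, r)` but misses an open part
of `B̄(c₂, r)`.
-/

open MeasureTheory
open scoped ENNReal

/-- The uniform probability measure on the closed ball of center `c` and radius `r`
in the Euclidean plane. -/
noncomputable def unifBall (c : EuclideanSpace ℝ (Fin 2)) (r : ℝ) :
    Measure (EuclideanSpace ℝ (Fin 2)) :=
  (volume (Metric.closedBall c r))⁻¹ • volume.restrict (Metric.closedBall c r)

open Metric EuclideanGeometry AffineSubspace

theorem AffineIsometryEquiv.measurePreserving {E F : Type*}
    [NormedAddCommGroup E] [InnerProductSpace ℝ E] [FiniteDimensional ℝ E]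
    [MeasurableSpace E] [BorelSpace E]
    [NormedAddCommGroup F] [InnerProductSpace ℝ F] [FiniteDimensional ℝ F]
    [MeasurableSpace F] [BorelSpace F] (f : E ≃ᵃⁱ[ℝ] F) :
    MeasurePreserving f := by
  have hf : ⇑f = (· + f 0) ∘ f.linearIsometryEquiv := by
    ext p
    simpa using f.map_vadd 0 p
  rw [hf]
  exact (measurePreserving_add_right volume (f 0)).comp f.linearIsometryEquiv.measurePreserving

section PerpBisector

variable {E : Type*} [NormedAddCommGroup E] [InnerProductSpace ℝ E]

instance (c c' : E) : Nonempty (perpBisector c c') :=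
  ⟨⟨midpoint ℝ c c', midpoint_mem_perpBisector c c'⟩⟩

variable [FiniteDimensional ℝ E]

theorem reflection_perpBisector_left (c c' : E) : reflection (perpBisector c c') c = c' := by
  have hv : c -ᵥ midpoint ℝ c c' ∈ (perpBisector c c').directionᗮ := by
    rw [direction_perpBisector, Submodule.orthogonal_orthogonal, left_vsub_midpoint,
      ← neg_vsub_eq_vsub_rev c' c]
    exact Submodule.smul_mem _ _ (Submodule.neg_mem _ (Submodule.mem_span_singleton_self _))
  have := reflection_orthogonal_vadd (midpoint_mem_perpBisector c c') hv
  rw [vsub_vadd, neg_vsub_eq_vsub_rev, ← Equiv.pointReflection_apply] at this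
  rw [this, Equiv.pointReflection_midpoint_left]

theorem dist_reflection_perpBisector_le {c c' x q : E} (hx : dist x c ≤ dist x c')
    (hq : dist q c' ≤ dist q c) :
    dist (reflection (perpBisector c c') q) x ≤ dist q x := by
  obtain ⟨h, hseg, hh⟩ : ∃ h ∈ segment ℝ q x, dist h c' - dist h c = 0 :=
    (convex_segment q x).isPreconnected.intermediate_value (left_mem_segment ℝ q x)
      (right_mem_segment ℝ q x) (by fun_prop) ⟨by linarith, by linarith⟩
  have hmem : h ∈ perpBisector c c' := mem_perpBisector_iff_dist_eq.2 (by linarith)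
  calc dist (reflection (perpBisector c c') q) x
      ≤ dist (reflection (perpBisector c c') q) h + dist h x := dist_triangle _ _ _
    _ = dist q h + dist h x := by
      rw [dist_comm, dist_reflection_eq_of_mem _ hmem, dist_comm]
    _ = dist q x := dist_add_dist_of_mem_segment hseg

variable [MeasurableSpace E] [BorelSpace E]

theorem volume_ball_inter_closedBall_le {x c c' : E} (h : dist x c ≤ dist x c') (t r : ℝ) :
    volume (ball x t ∩ closedBall c' r) ≤ volume (ball x t ∩ closedBall c r) := by
  set σ := reflection (perpBisector c c')
  have hσc : σ c = c' := reflection_perpBisector_left c c'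
  have hσc' : σ c' = c := by rw [← hσc, reflection_reflection]
  have hsub : σ ⁻¹' ((ball x t ∩ closedBall c' r) \ closedBall c r)
      ⊆ (ball x t ∩ closedBall c r) \ closedBall c' r := by
    rintro p ⟨⟨hpx, hpc'⟩, hpc⟩
    simp only [Set.mem_sdiff, Set.mem_inter_iff, mem_ball, mem_closedBall, not_le]
      at hpx hpc' hpc ⊢
    have hside : dist (σ p) c' ≤ dist (σ p) c := hpc'.trans hpc.le
    rw [← hσc', σ.dist_map] at hpc
    rw [← hσc, σ.dist_map] at hpc'
    refine ⟨⟨?_, hpc'⟩, hpc⟩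
    calc dist p x = dist (σ (σ p)) x := by rw [reflection_reflection]
      _ ≤ dist (σ p) x := dist_reflection_perpBisector_le h hside
      _ < t := hpx
  calc volume (ball x t ∩ closedBall c' r)
      = volume (ball x t ∩ closedBall c' r ∩ closedBall c r)
        + volume ((ball x t ∩ closedBall c' r) \ closedBall c r) :=
      (measure_inter_add_sdiff _ measurableSet_closedBall).symm
    _ ≤ volume (ball x t ∩ closedBall c r ∩ closedBall c' r)
        + volume ((ball x t ∩ closedBall c r) \ closedBall c' r) := by
      rw [Set.inter_right_comm]
      refine add_le_add le_rfl ?_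
      rw [← σ.measurePreserving.measure_preimage
        ((measurableSet_ball.inter measurableSet_closedBall).diff
          measurableSet_closedBall).nullMeasurableSet]
      exact measure_mono hsub
    _ = volume (ball x t ∩ closedBall c r) := measure_inter_add_sdiff _ measurableSet_closedBall

end PerpBisector

theorem exists_mem_ball_lt_dist {E : Type*} [NormedAddCommGroup E] [NormedSpace ℝ E]
    {x c : E} (hxc : x ≠ c) {r t : ℝ} (hr : 0 < r) (ht : t < dist x c + r) :
    ∃ w ∈ ball c r, t < dist w x := by
  have hb : 0 < dist x c := dist_pos.2 hxc
  obtain ⟨ρ, hρ, hρr⟩ := exists_between (max_lt (by linarith : t - dist x c < r) hr)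
  have hρ₀ : 0 < ρ := (le_max_right _ _).trans_lt hρ
  refine ⟨AffineMap.lineMap x c (1 + ρ / dist x c), ?_, ?_⟩
  · rw [mem_ball, dist_lineMap_right, sub_add_cancel_left, norm_neg,
      Real.norm_of_nonneg (by positivity), div_mul_cancel₀ _ hb.ne']
    exact hρr
  · rw [dist_lineMap_left, Real.norm_of_nonneg (by positivity), add_mul, one_mul,
      div_mul_cancel₀ _ hb.ne']
    linarith [le_max_left (t - dist x c) 0]

section NearerProb

variable {α : Type*} [PseudoMetricSpace α] [MeasurableSpace α] [OpensMeasurableSpace α]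
  {μ μ' ν : Measure α} {x : α}

noncomputable def nearerProb (μ ν : Measure α) (x : α) : ℝ≥0∞ :=
  (μ.prod ν) {uv : α × α | dist uv.1 x < dist uv.2 x}

theorem measurable_dist_left (x : α) : Measurable (dist · x) :=
  (continuous_id.dist continuous_const).measurable

theorem measurable_dist_fst (x : α) : Measurable fun uv : α × α => dist uv.1 x :=
  (measurable_dist_left x).comp measurable_fst

theorem measurable_dist_snd (x : α) : Measurable fun uv : α × α => dist uv.2 x :=
  (measurable_dist_left x).comp measurable_snd

theorem nearerProb_eq_lintegral [SFinite μ] [SFinite ν] :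
    nearerProb μ ν x = ∫⁻ v, μ (ball x (dist v x)) ∂ν :=
  Measure.prod_apply_symm <| measurableSet_lt (measurable_dist_fst x) (measurable_dist_snd x)

theorem nearerProb_add_nearerProb_swap [IsProbabilityMeasure μ] [IsProbabilityMeasure ν]
    (hν : ∀ t, ν (sphere x t) = 0) : nearerProb μ ν x + nearerProb ν μ x = 1 := by
  have hswap : nearerProb ν μ x = (μ.prod ν) {uv | dist uv.2 x < dist uv.1 x} := by
    rw [nearerProb, ← Measure.prod_swap, Measure.map_apply measurable_swap
      (measurableSet_lt (measurable_dist_fst x) (measurable_dist_snd x))]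
    rfl
  have hties : (μ.prod ν) {uv | dist uv.1 x = dist uv.2 x} = 0 := by
    refine (Measure.measure_prod_null
      (measurableSet_eq_fun (measurable_dist_fst x) (measurable_dist_snd x))).2
      (Filter.Eventually.of_forall fun u => ?_)
    have hsphere :
        Prod.mk u ⁻¹' {uv : α × α | dist uv.1 x = dist uv.2 x} = sphere x (dist u x) := by
      ext v
      simp [eq_comm]
    show ν _ = 0
    rw [hsphere, hν]
  have hcompl : {uv : α × α | dist uv.1 x < dist uv.2 x} ∪ {uv | dist uv.2 x < dist uv.1 x}
      = {uv | dist uv.1 x = dist uv.2 x}ᶜ := by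
    ext uv
    simp [lt_or_lt_iff_ne]
  rw [hswap, nearerProb,
    ← measure_union _ (measurableSet_lt (measurable_dist_snd x) (measurable_dist_fst x)), hcompl,
    prob_compl_eq_one_sub (measurableSet_eq_fun (measurable_dist_fst x) (measurable_dist_snd x)),
    hties, tsub_zero]
  exact Set.disjoint_left.2 fun uv (h : dist uv.1 x < dist uv.2 x) h' => lt_asymm h h'

theorem nearerProb_self [IsProbabilityMeasure μ] (hμ : ∀ t, μ (sphere x t) = 0) :
    nearerProb μ μ x = 1 / 2 := by
  rw [ENNReal.eq_div_iff two_ne_zero ENNReal.ofNat_ne_top, two_mul]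
  exact nearerProb_add_nearerProb_swap hμ

theorem nearerProb_mono_left [SFinite μ] [SFinite μ'] [SFinite ν]
    (h : ∀ t, μ' (ball x t) ≤ μ (ball x t)) : nearerProb μ' ν x ≤ nearerProb μ ν x := by
  simp only [nearerProb_eq_lintegral]
  exact lintegral_mono fun v => h _

theorem nearerProb_lt_nearerProb [SFinite μ] [IsFiniteMeasure μ'] [IsFiniteMeasure ν]
    (h : ∀ t, μ' (ball x t) ≤ μ (ball x t))
    (hlt : ν {v | μ' (ball x (dist v x)) < μ (ball x (dist v x))} ≠ 0) :
    nearerProb μ' ν x < nearerProb μ ν x := by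
  have hfin : nearerProb μ' ν x ≠ ∞ := measure_ne_top _ _
  simp only [nearerProb_eq_lintegral] at hfin ⊢
  have hmono : Monotone fun t => μ (ball x t) := fun _ _ hle => measure_mono (ball_subset_ball hle)
  refine lintegral_strict_mono_of_ae_le_of_frequently_ae_lt
    (hmono.measurable.comp (measurable_dist_left x)).aemeasurable hfin
    (Filter.Eventually.of_forall fun v => h _) (frequently_ae_iff.2 fun h0 => hlt ?_)
  exact measure_mono_null (fun v hv => ne_of_lt hv) h0

end NearerProb

local notation "ℝ²" => EuclideanSpace ℝ (Fin 2)

section UnifBall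

variable {c c' x : ℝ²} {r t : ℝ}

theorem unifBall_apply (c : ℝ²) (r : ℝ) (s : Set ℝ²) :
    unifBall c r s = (volume (closedBall c r))⁻¹ * volume (s ∩ closedBall c r) := by
  rw [unifBall, Measure.smul_apply, Measure.restrict_apply' measurableSet_closedBall, smul_eq_mul]

theorem isProbabilityMeasure_unifBall (c : ℝ²) (hr : 0 < r) :
    IsProbabilityMeasure (unifBall c r) :=
  ⟨by rw [unifBall_apply, Set.univ_inter,
    ENNReal.inv_mul_cancel (measure_closedBall_pos volume c hr).ne' measure_closedBall_lt_top.ne]⟩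

theorem unifBall_sphere (c x : ℝ²) (r t : ℝ) : unifBall c r (sphere x t) = 0 := by
  rw [unifBall_apply, measure_mono_null Set.inter_subset_left (Measure.addHaar_sphere volume x t),
    mul_zero]

theorem unifBall_pos_of_isOpen {s : Set ℝ²} (hs : IsOpen s) (hne : (s ∩ ball c r).Nonempty) :
    0 < unifBall c r s := by
  have hsub : s ∩ ball c r ⊆ s ∩ closedBall c r :=
    Set.inter_subset_inter_right _ ball_subset_closedBall
  rw [unifBall_apply]
  exact ENNReal.mul_pos (ENNReal.inv_ne_zero.2 measure_closedBall_lt_top.ne)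
    ((hs.inter isOpen_ball).measure_pos volume hne |>.trans_le (measure_mono hsub)).ne'

theorem unifBall_ball_eq_one (hr : 0 < r) (h : dist x c + r < t) :
    unifBall c r (ball x t) = 1 := by
  have hsub : closedBall c r ⊆ ball x t := fun u hu => by
    rw [mem_closedBall] at hu
    rw [mem_ball]
    linarith [dist_triangle u c x, dist_comm c x]
  rw [unifBall_apply, Set.inter_eq_right.2 hsub,
    ENNReal.inv_mul_cancel (measure_closedBall_pos volume c hr).ne' measure_closedBall_lt_top.ne]

theorem unifBall_ball_lt_one (hr : 0 < r) (hxc : x ≠ c) (h : t < dist x c + r) :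
    unifBall c r (ball x t) < 1 := by
  have := isProbabilityMeasure_unifBall c hr
  obtain ⟨w, hw, hwx⟩ := exists_mem_ball_lt_dist hxc hr h
  set O := ball c r ∩ {u | t < dist u x}
  have hO : IsOpen O :=
    isOpen_ball.inter (isOpen_lt continuous_const (continuous_id.dist continuous_const))
  have hpos : 0 < unifBall c r O := unifBall_pos_of_isOpen hO ⟨w, ⟨hw, hwx⟩, hw⟩
  calc unifBall c r (ball x t) ≤ unifBall c r Oᶜ :=
        measure_mono fun u hu hO => (mem_ball.1 hu).not_gt hO.2
    _ = 1 - unifBall c r O := prob_compl_eq_one_sub hO.measurableSet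
    _ < 1 := ENNReal.sub_lt_self ENNReal.one_ne_top one_ne_zero hpos.ne'

theorem unifBall_ball_le_of_dist_le (h : dist x c ≤ dist x c') :
    unifBall c' r (ball x t) ≤ unifBall c r (ball x t) := by
  rw [unifBall_apply, unifBall_apply, Measure.addHaar_closedBall_center volume c,
    Measure.addHaar_closedBall_center volume c']
  exact mul_le_mul_right (volume_ball_inter_closedBall_le h t r) _

theorem nearerProb_unifBall_self (c x : ℝ²) (hr : 0 < r) :
    nearerProb (unifBall c r) (unifBall c r) x = 1 / 2 :=
  have := isProbabilityMeasure_unifBall c hr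
  nearerProb_self fun t => unifBall_sphere c x r t

theorem nearerProb_unifBall_le_one_half (hr : 0 < r) (h : dist x c' ≤ dist x c) :
    nearerProb (unifBall c r) (unifBall c' r) x ≤ 1 / 2 := by
  have := isProbabilityMeasure_unifBall c hr
  have := isProbabilityMeasure_unifBall c' hr
  rw [← nearerProb_unifBall_self c' x hr]
  exact nearerProb_mono_left fun t => unifBall_ball_le_of_dist_le h

theorem one_half_le_nearerProb_unifBall (hr : 0 < r) (h : dist x c ≤ dist x c') :
    1 / 2 ≤ nearerProb (unifBall c r) (unifBall c' r) x := by
  have := isProbabilityMeasure_unifBall c hr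
  have := isProbabilityMeasure_unifBall c' hr
  rw [← nearerProb_unifBall_self c' x hr]
  exact nearerProb_mono_left fun t => unifBall_ball_le_of_dist_le h

theorem one_half_lt_nearerProb_unifBall (hr : 0 < r) (h : dist x c < dist x c') :
    1 / 2 < nearerProb (unifBall c r) (unifBall c' r) x := by
  have := isProbabilityMeasure_unifBall c hr
  have := isProbabilityMeasure_unifBall c' hr
  have hxc' : x ≠ c' := dist_pos.1 (dist_nonneg.trans_lt h)
  rw [← nearerProb_unifBall_self c' x hr]
  refine nearerProb_lt_nearerProb (fun t => unifBall_ball_le_of_dist_le h.le) ?_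
  set S := ball c' r ∩ {v | dist x c + r < dist v x}
  have hS : IsOpen S :=
    isOpen_ball.inter (isOpen_lt continuous_const (continuous_id.dist continuous_const))
  obtain ⟨w, hw, hwx⟩ :=
    exists_mem_ball_lt_dist hxc' hr (by linarith : dist x c + r < dist x c' + r)
  refine ne_bot_of_le_ne_bot (unifBall_pos_of_isOpen hS ⟨w, ⟨hw, hwx⟩, hw⟩).ne' (measure_mono ?_)
  rintro v ⟨hv, hvx⟩
  have hvx' : dist v x < dist x c' + r := by
    linarith [dist_triangle v c' x, dist_comm c' x, mem_ball.1 hv]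
  show unifBall c' r _ < unifBall c r _
  rw [unifBall_ball_eq_one hr hvx]
  exact unifBall_ball_lt_one hr hxc' hvx'

theorem nearerProb_unifBall_lt_one_half (hr : 0 < r) (h : dist x c' < dist x c) :
    nearerProb (unifBall c r) (unifBall c' r) x < 1 / 2 := by
  have := isProbabilityMeasure_unifBall c hr
  have := isProbabilityMeasure_unifBall c' hr
  have hsum := nearerProb_add_nearerProb_swap (μ := unifBall c r) fun t => unifBall_sphere c' x r t
  by_contra! hle
  have hgt :=
    ENNReal.add_lt_add_of_le_of_lt (by norm_num) hle (one_half_lt_nearerProb_unifBall hr h)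
  rw [ENNReal.add_halves, hsum] at hgt
  exact lt_irrefl 1 hgt

end UnifBall

theorem prob_bisector_equi_range_disks_general (c₁ c₂ : EuclideanSpace ℝ (Fin 2)) (r : ℝ)
    (hr : 0 < r) :
    (∀ x : EuclideanSpace ℝ (Fin 2), dist x c₁ = dist x c₂ →
      ((unifBall c₁ r).prod (unifBall c₂ r))
        {uv : EuclideanSpace ℝ (Fin 2) × EuclideanSpace ℝ (Fin 2) |
          dist uv.1 x < dist uv.2 x} = 1 / 2) ∧
    (∀ x : EuclideanSpace ℝ (Fin 2), dist x c₁ < dist x c₂ →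
      ((unifBall c₁ r).prod (unifBall c₂ r))
        {uv : EuclideanSpace ℝ (Fin 2) × EuclideanSpace ℝ (Fin 2) |
          dist uv.1 x < dist uv.2 x} > 1 / 2) ∧
    (∀ x : EuclideanSpace ℝ (Fin 2), dist x c₁ > dist x c₂ →
      ((unifBall c₁ r).prod (unifBall c₂ r))
        {uv : EuclideanSpace ℝ (Fin 2) × EuclideanSpace ℝ (Fin 2) |
          dist uv.1 x < dist uv.2 x} < 1 / 2) :=
  ⟨fun _ hx => le_antisymm (nearerProb_unifBall_le_one_half hr hx.ge)
      (one_half_le_nearerProb_unifBall hr hx.le),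
    fun _ hx => one_half_lt_nearerProb_unifBall hr hx,
    fun _ hx => nearerProb_unifBall_lt_one_half hr hx⟩

theorem prob_bisector_equi_range_disks (c₁ c₂ : EuclideanSpace ℝ (Fin 2)) (r : ℝ)
    (hr : 0 < r) (hc : c₁ ≠ c₂) :
    (∀ x : EuclideanSpace ℝ (Fin 2), dist x c₁ = dist x c₂ →
      ((unifBall c₁ r).prod (unifBall c₂ r))
        {uv : EuclideanSpace ℝ (Fin 2) × EuclideanSpace ℝ (Fin 2) |
          dist uv.1 x < dist uv.2 x} = 1 / 2) ∧
    (∀ x : EuclideanSpace ℝ (Fin 2), dist x c₁ < dist x c₂ →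
      ((unifBall c₁ r).prod (unifBall c₂ r))
        {uv : EuclideanSpace ℝ (Fin 2) × EuclideanSpace ℝ (Fin 2) |
          dist uv.1 x < dist uv.2 x} > 1 / 2) ∧
    (∀ x : EuclideanSpace ℝ (Fin 2), dist x c₁ > dist x c₂ →
      ((unifBall c₁ r).prod (unifBall c₂ r))
        {uv : EuclideanSpace ℝ (Fin 2) × EuclideanSpace ℝ (Fin 2) |
          dist uv.1 x < dist uv.2 x} < 1 / 2) :=
  prob_bisector_equi_range_disks_general c₁ c₂ r hr
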